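/- arXiv:1309.4869 — 4 statements merged into one kernel-verified Lean document; each statement's English description precedes it below -/
import Mathlib

section
/- Let g₁, g₂ : [0,T] → H be continuous controls, let (u₁,u₁') and (u₂,u₂') be strong solutions of the parabolic variational inequality with controls g₁ and g₂ respectively (same initial value u_b), let μ ∈ [0,1], set g₃(t) = μg₁(t)+(1−μ)g₂(t), u₃(t) = μu₁(t)+(1−μ)u₂(t), and let (u₄,u₄') be a strong solution with control g₃ and initial value u_b. Define α(t) = ⟨u₁'(t), i(u₂(t))−i(u₁(t))⟩_H + a(u₁(t), u₂(t)−u₁(t)) + Φ(u₂(t)) − Φ(u₁(t)) − ⟨g₁(t), i(u₂(t))−i(u₁(t))⟩_H, β(t) = ⟨u₂'(t), i(u₁(t))−i(u₂(t))⟩_H + a(u₂(t), u₁(t)−u₂(t)) + Φ(u₁(t)) − Φ(u₂(t)) − ⟨g₂(t), i(u₁(t))−i(u₂(t))⟩_H, I₁₄(t) = ⟨u₁'(t), i(u₄(t))−i(u₁(t))⟩_H + a(u₁(t), u₄(t)−u₁(t)) + Φ(u₄(t)) − Φ(u₁(t)) − ⟨g₁(t), i(u₄(t))−i(u₁(t))⟩_H,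 and I₂₄(t) analogously with (u₂,u₂',g₂). If ∫₀ᵀ α(t) dt = 0 and ∫₀ᵀ β(t) dt = 0, then for every t ∈ [0,T]: u₄(t) = u₃(t), I₁₄(t) = 0, I₂₄(t) = 0, and Φ(u₃(t)) = μΦ(u₁(t)) + (1−μ)Φ(u₂(t)). -/
/-! Once `α` and `β` vanish, the residuals of the variational inequality combine affinely
up to the Jensen gap of `Φ`, so `u₃` is itself a strong solution with control `g₃`. Strong
solutions are unique: adding the inequalities for two of them, tested against each other, gives
`d/dt ‖i u₄ − i u₃‖² ≤ −2 a(u₄ − u₃, u₄ − u₃) ≤ 0`. Hence `u₄ = u₃`, and then the inequality for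
`u₁` tested against `u₃` forces the Jensen gap, and with it `I₁₄` and `I₂₄`, to vanish. -/

open scoped RealInnerProductSpace

/-- A strong solution of the parabolic variational inequality of the second kind:
`u : [0,T] → K` and `u' : [0,T] → H` are continuous, `i ∘ u` has derivative
`u'(t)` at every `t ∈ [0,T]`, `u(0) = u_b`, and for every `t ∈ [0,T]` and `v ∈ K`:
`⟨u'(t), i v − i u(t)⟩_H + a(u(t), v − u(t)) + Φ(v) − Φ(u(t)) ≥ ⟨g(t), i v − i u(t)⟩_H`. -/
def IsStrongSolution {V H : Type*} [NormedAddCommGroup V] [InnerProductSpace ℝ V]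
    [NormedAddCommGroup H] [InnerProductSpace ℝ H]
    (i : V →L[ℝ] H) (a : V →L[ℝ] V →L[ℝ] ℝ) (Φ : V → ℝ) (K : Set V)
    (T : ℝ) (u_b : V) (g : ℝ → H) (u : ℝ → V) (u' : ℝ → H) : Prop :=
  Continuous u ∧ Continuous u' ∧
  (∀ t ∈ Set.Icc (0 : ℝ) T, u t ∈ K) ∧
  (∀ t ∈ Set.Icc (0 : ℝ) T, HasDerivAt (fun s => i (u s)) (u' t) t) ∧
  u 0 = u_b ∧
  ∀ t ∈ Set.Icc (0 : ℝ) T, ∀ v ∈ K,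
    ⟪u' t, i v - i (u t)⟫ + a (u t) (v - u t) + Φ v - Φ (u t)
      ≥ ⟪g t, i v - i (u t)⟫

open MeasureTheory intervalIntegral in
theorem eqOn_zero_of_intervalIntegral_eq_zero {f : ℝ → ℝ} {a b : ℝ} (hab : a < b)
    (hf : ContinuousOn f (Set.Icc a b)) (hf₀ : ∀ t ∈ Set.Icc a b, 0 ≤ f t)
    (hint : ∫ t in a..b, f t = 0) : Set.EqOn f 0 (Set.Icc a b) := by
  have hf₀_ae : 0 ≤ᵐ[volume.restrict (Set.Ioc a b)] f := by
    filter_upwards [ae_restrict_mem measurableSet_Ioc] with t ht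
    exact hf₀ t (Set.Ioc_subset_Icc_self ht)
  have hf_ae := (integral_eq_zero_iff_of_le_of_nonneg_ae hab.le hf₀_ae
    (hf.intervalIntegrable_of_Icc hab.le)).mp hint
  rw [Measure.restrict_congr_set Ioc_ae_eq_Icc] at hf_ae
  exact Measure.eqOn_Icc_of_ae_eq volume hab.ne hf_ae hf continuousOn_const

section VariationalInequality

variable {V H : Type*} [NormedAddCommGroup V] [InnerProductSpace ℝ V]
  [NormedAddCommGroup H] [InnerProductSpace ℝ H]
  (i : V →L[ℝ] H) (a : V →L[ℝ] V →L[ℝ] ℝ) (Φ : V → ℝ)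

/-- The variational inequality says this is nonnegative for `v ∈ K`; `α`, `β`, `I₁₄`, `I₂₄` are
its values, e.g. `α t = viResidual i a Φ (u₁' t) (g₁ t) (u₁ t) (u₂ t)`. -/
noncomputable def viResidual (w g : H) (u v : V) : ℝ :=
  ⟪w, i v - i u⟫ + a u (v - u) + Φ v - Φ u - ⟪g, i v - i u⟫

theorem viResidual_convexComb (μ : ℝ) (w₁ w₂ g₁ g₂ : H) (u₁ u₂ v : V) :
    viResidual i a Φ (μ • w₁ + (1 - μ) • w₂) (μ • g₁ + (1 - μ) • g₂) (μ • u₁ + (1 - μ) • u₂) v =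
      μ * viResidual i a Φ w₁ g₁ u₁ v + (1 - μ) * viResidual i a Φ w₂ g₂ u₂ v
        + (μ * Φ u₁ + (1 - μ) * Φ u₂ - Φ (μ • u₁ + (1 - μ) • u₂))
        - μ * (1 - μ) * (viResidual i a Φ w₁ g₁ u₁ u₂ + viResidual i a Φ w₂ g₂ u₂ u₁) := by
  simp only [viResidual, map_add, map_smul, map_sub, add_apply, FunLike.coe_smul, Pi.smul_apply,
    smul_eq_mul, inner_add_left, inner_add_right, inner_sub_right, real_inner_smul_left,
    real_inner_smul_right]
  ring

theorem viResidual_segment (w g : H) (u v : V) (s : ℝ) :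
    viResidual i a Φ w g u ((1 - s) • u + s • v) =
      s * viResidual i a Φ w g u v + (Φ ((1 - s) • u + s • v) - ((1 - s) * Φ u + s * Φ v)) := by
  simp only [viResidual, map_add, map_smul, map_sub, smul_eq_mul, inner_add_right,
    inner_sub_right, real_inner_smul_right]
  ring

theorem viResidual_add_viResidual_swap (w w' g : H) (u v : V) :
    viResidual i a Φ w g u v + viResidual i a Φ w' g v u + a (v - u) (v - u) =
      ⟪w - w', i v - i u⟫ := by
  simp only [viResidual, map_sub, sub_apply, inner_sub_left, inner_sub_right]
  ring

variable {i a Φ}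

theorem Continuous.viResidual {w g : ℝ → H} {u v : ℝ → V} (hΦ : Continuous Φ)
    (hw : Continuous w) (hg : Continuous g) (hu : Continuous u) (hv : Continuous v) :
    Continuous fun t => viResidual i a Φ (w t) (g t) (u t) (v t) := by
  unfold _root_.viResidual
  fun_prop

variable {K : Set V} {T : ℝ} {u_b : V} {g : ℝ → H} {u v : ℝ → V} {u' v' : ℝ → H}

theorem IsStrongSolution.viResidual_nonneg (h : IsStrongSolution i a Φ K T u_b g u u')
    {t : ℝ} (ht : t ∈ Set.Icc 0 T) {x : V} (hx : x ∈ K) :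
    0 ≤ viResidual i a Φ (u' t) (g t) (u t) x :=
  sub_nonneg.mpr (h.2.2.2.2.2 t ht x hx)

theorem IsStrongSolution.eqOn (hi : Function.Injective i) (ha : ∀ x, 0 ≤ a x x)
    (hu : IsStrongSolution i a Φ K T u_b g u u') (hv : IsStrongSolution i a Φ K T u_b g v v') :
    Set.EqOn u v (Set.Icc 0 T) := by
  set E : ℝ → ℝ := fun t => ‖i (u t) - i (v t)‖ ^ 2
  have hE_deriv (t : ℝ) (ht : t ∈ Set.Icc 0 T) :
      HasDerivAt E (2 * ⟪i (u t) - i (v t), u' t - v' t⟫) t :=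
    ((hu.2.2.2.1 t ht).sub (hv.2.2.2.1 t ht)).norm_sq
  have hE_deriv_nonpos (t : ℝ) (ht : t ∈ Set.Icc 0 T) :
      2 * ⟪i (u t) - i (v t), u' t - v' t⟫ ≤ 0 := by
    have hsum := viResidual_add_viResidual_swap i a Φ (u' t) (v' t) (g t) (u t) (v t)
    have hu_v := hu.viResidual_nonneg ht (hv.2.2.1 t ht)
    have hv_u := hv.viResidual_nonneg ht (hu.2.2.1 t ht)
    rw [real_inner_comm, ← neg_sub (i (v t)), inner_neg_right]
    linarith [ha (v t - u t)]
  have hE_anti : AntitoneOn E (Set.Icc 0 T) :=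
    antitoneOn_of_hasDerivWithinAt_nonpos (convex_Icc 0 T)
      (((i.continuous.comp hu.1).sub (i.continuous.comp hv.1)).norm.pow 2).continuousOn
      (fun t ht => (hE_deriv t (interior_subset ht)).hasDerivWithinAt)
      (fun t ht => hE_deriv_nonpos t (interior_subset ht))
  intro t ht
  have hE0 : E 0 = 0 := by simp [E, hu.2.2.2.2.1, hv.2.2.2.2.1]
  have hEt : E t = 0 :=
    le_antisymm (hE0 ▸ hE_anti ⟨le_rfl, ht.1.trans ht.2⟩ ht ht.1) (by positivity)
  exact hi (sub_eq_zero.mp (by simpa [E] using hEt))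

theorem ConvexOn.le_convexComb (hΦ : ConvexOn ℝ Set.univ Φ) {μ : ℝ}
    (hμ : μ ∈ Set.Icc (0 : ℝ) 1) (x y : V) :
    Φ (μ • x + (1 - μ) • y) ≤ μ * Φ x + (1 - μ) * Φ y :=
  hΦ.2 (Set.mem_univ x) (Set.mem_univ y) hμ.1 (sub_nonneg.mpr hμ.2) (add_sub_cancel μ 1)

theorem IsStrongSolution.convexComb {g₁ g₂ : ℝ → H} {u₁ u₂ : ℝ → V} {u₁' u₂' : ℝ → H}
    (hK : Convex ℝ K) (hΦ : ConvexOn ℝ Set.univ Φ)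
    (h₁ : IsStrongSolution i a Φ K T u_b g₁ u₁ u₁') (h₂ : IsStrongSolution i a Φ K T u_b g₂ u₂ u₂')
    (h₁₂ : ∀ t ∈ Set.Icc 0 T, viResidual i a Φ (u₁' t) (g₁ t) (u₁ t) (u₂ t) = 0)
    (h₂₁ : ∀ t ∈ Set.Icc 0 T, viResidual i a Φ (u₂' t) (g₂ t) (u₂ t) (u₁ t) = 0)
    {μ : ℝ} (hμ : μ ∈ Set.Icc (0 : ℝ) 1) :
    IsStrongSolution i a Φ K T u_b (fun t => μ • g₁ t + (1 - μ) • g₂ t)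
      (fun t => μ • u₁ t + (1 - μ) • u₂ t) (fun t => μ • u₁' t + (1 - μ) • u₂' t) := by
  have h1μ : 0 ≤ 1 - μ := sub_nonneg.mpr hμ.2
  have hVI (t : ℝ) (ht : t ∈ Set.Icc 0 T) (x : V) (hx : x ∈ K) :
      0 ≤ viResidual i a Φ (μ • u₁' t + (1 - μ) • u₂' t) (μ • g₁ t + (1 - μ) • g₂ t)
        (μ • u₁ t + (1 - μ) • u₂ t) x := by
    rw [viResidual_convexComb, h₁₂ t ht, h₂₁ t ht]
    have hjensen := hΦ.le_convexComb hμ (u₁ t) (u₂ t)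
    have := mul_nonneg hμ.1 (h₁.viResidual_nonneg ht hx)
    have := mul_nonneg h1μ (h₂.viResidual_nonneg ht hx)
    linarith
  refine ⟨(h₁.1.const_smul μ).add (h₂.1.const_smul (1 - μ)),
    (h₁.2.1.const_smul μ).add (h₂.2.1.const_smul (1 - μ)),
    fun t ht => hK (h₁.2.2.1 t ht) (h₂.2.2.1 t ht) hμ.1 h1μ (add_sub_cancel μ 1),
    fun t ht => ?_, ?_, fun t ht x hx => sub_nonneg.mp (hVI t ht x hx)⟩
  · convert ((h₁.2.2.2.1 t ht).const_smul μ).add ((h₂.2.2.2.1 t ht).const_smul (1 - μ)) using 1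
    ext s
    simp only [map_add, map_smul, Pi.add_apply, Pi.smul_apply]
  · simp only [h₁.2.2.2.2.1, h₂.2.2.2.2.1, ← add_smul, add_sub_cancel, one_smul]

end VariationalInequality

theorem stmt_1_general {V H : Type*} [NormedAddCommGroup V] [InnerProductSpace ℝ V]
    [NormedAddCommGroup H] [InnerProductSpace ℝ H]
    (i : V →L[ℝ] H) (hi_inj : Function.Injective i)
    (a : V →L[ℝ] V →L[ℝ] ℝ)
    (lam : ℝ) (hlam : 0 < lam) (ha_coer : ∀ v : V, lam * ‖v‖ ^ 2 ≤ a v v)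
    (Φ : V → ℝ) (hΦ_conv : ConvexOn ℝ Set.univ Φ) (hΦ_cont : Continuous Φ)
    (K : Set V) (hK_conv : Convex ℝ K)
    (T : ℝ) (hT : 0 < T) (u_b : V)
    (g₁ g₂ : ℝ → H) (hg₁ : Continuous g₁) (hg₂ : Continuous g₂)
    (u₁ u₂ u₄ : ℝ → V) (u₁' u₂' u₄' : ℝ → H)
    (h₁ : IsStrongSolution i a Φ K T u_b g₁ u₁ u₁')
    (h₂ : IsStrongSolution i a Φ K T u_b g₂ u₂ u₂')
    (μ : ℝ) (hμ : μ ∈ Set.Icc (0 : ℝ) 1)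
    (h₄ : IsStrongSolution i a Φ K T u_b
      (fun t => μ • g₁ t + (1 - μ) • g₂ t) u₄ u₄')
    (u₃ : ℝ → V) (hu₃ : ∀ t, u₃ t = μ • u₁ t + (1 - μ) • u₂ t)
    (I₁₄ I₂₄ α β : ℝ → ℝ)
    (hI₁₄ : ∀ t, I₁₄ t = ⟪u₁' t, i (u₄ t) - i (u₁ t)⟫ + a (u₁ t) (u₄ t - u₁ t)
      + Φ (u₄ t) - Φ (u₁ t) - ⟪g₁ t, i (u₄ t) - i (u₁ t)⟫)
    (hI₂₄ : ∀ t, I₂₄ t = ⟪u₂' t, i (u₄ t) - i (u₂ t)⟫ + a (u₂ t) (u₄ t - u₂ t)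
      + Φ (u₄ t) - Φ (u₂ t) - ⟪g₂ t, i (u₄ t) - i (u₂ t)⟫)
    (hα : ∀ t, α t = ⟪u₁' t, i (u₂ t) - i (u₁ t)⟫ + a (u₁ t) (u₂ t - u₁ t)
      + Φ (u₂ t) - Φ (u₁ t) - ⟪g₁ t, i (u₂ t) - i (u₁ t)⟫)
    (hβ : ∀ t, β t = ⟪u₂' t, i (u₁ t) - i (u₂ t)⟫ + a (u₂ t) (u₁ t - u₂ t)
      + Φ (u₁ t) - Φ (u₂ t) - ⟪g₂ t, i (u₁ t) - i (u₂ t)⟫)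
    (hα0 : ∫ t in (0 : ℝ)..T, α t = 0) (hβ0 : ∫ t in (0 : ℝ)..T, β t = 0) :
    ∀ t ∈ Set.Icc (0 : ℝ) T,
      u₄ t = u₃ t ∧ I₁₄ t = 0 ∧ I₂₄ t = 0 ∧
      Φ (u₃ t) = μ * Φ (u₁ t) + (1 - μ) * Φ (u₂ t) := by
  have hα_cont : Continuous α := by
    rw [funext hα]; exact hΦ_cont.viResidual h₁.2.1 hg₁ h₁.1 h₂.1
  have hβ_cont : Continuous β := by
    rw [funext hβ]; exact hΦ_cont.viResidual h₂.2.1 hg₂ h₂.1 h₁.1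
  have hα_zero (t : ℝ) (ht : t ∈ Set.Icc 0 T) :
      viResidual i a Φ (u₁' t) (g₁ t) (u₁ t) (u₂ t) = 0 :=
    (hα t).symm.trans <| eqOn_zero_of_intervalIntegral_eq_zero hT hα_cont.continuousOn
      (fun s hs => (hα s).symm ▸ h₁.viResidual_nonneg hs (h₂.2.2.1 s hs)) hα0 ht
  have hβ_zero (t : ℝ) (ht : t ∈ Set.Icc 0 T) :
      viResidual i a Φ (u₂' t) (g₂ t) (u₂ t) (u₁ t) = 0 :=
    (hβ t).symm.trans <| eqOn_zero_of_intervalIntegral_eq_zero hT hβ_cont.continuousOn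
      (fun s hs => (hβ s).symm ▸ h₂.viResidual_nonneg hs (h₁.2.2.1 s hs)) hβ0 ht
  have h₃ := h₁.convexComb hK_conv hΦ_conv h₂ hα_zero hβ_zero hμ
  rw [← funext hu₃] at h₃
  have hu₄₃ : Set.EqOn u₄ u₃ (Set.Icc 0 T) :=
    h₄.eqOn hi_inj (fun x => (mul_nonneg hlam.le (sq_nonneg _)).trans (ha_coer x)) h₃
  intro t ht
  have hjensen := hΦ_conv.le_convexComb hμ (u₁ t) (u₂ t)
  have h₁₃ := viResidual_segment i a Φ (u₁' t) (g₁ t) (u₁ t) (u₂ t) (1 - μ)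
  rw [sub_sub_cancel, ← hu₃, hα_zero t ht] at h₁₃
  have h₂₃ := viResidual_segment i a Φ (u₂' t) (g₂ t) (u₂ t) (u₁ t) μ
  rw [add_comm ((1 - μ) • u₂ t), ← hu₃, hβ_zero t ht] at h₂₃
  have h₁₃_nonneg := h₁.viResidual_nonneg ht (h₃.2.2.1 t ht)
  rw [← hu₃] at hjensen
  have hI₁₄' : I₁₄ t = viResidual i a Φ (u₁' t) (g₁ t) (u₁ t) (u₃ t) := hu₄₃ ht ▸ hI₁₄ t
  have hI₂₄' : I₂₄ t = viResidual i a Φ (u₂' t) (g₂ t) (u₂ t) (u₃ t) := hu₄₃ ht ▸ hI₂₄ t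
  exact ⟨hu₄₃ ht, by linarith, by linarith, by linarith⟩

/-- If `∫₀ᵀ α = 0` and `∫₀ᵀ β = 0` then `u₄ = u₃ = μu₁ + (1−μ)u₂` on `[0,T]`,
`I₁₄ = I₂₄ = 0` on `[0,T]`, and `Φ(u₃) = μΦ(u₁) + (1−μ)Φ(u₂)` on `[0,T]`
(Corollary 2.3 of the paper). -/
theorem stmt_1 {V H : Type*} [NormedAddCommGroup V] [InnerProductSpace ℝ V]
    [NormedAddCommGroup H] [InnerProductSpace ℝ H]
    (i : V →L[ℝ] H) (hi_inj : Function.Injective i) (hi_dense : DenseRange i)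
    (a : V →L[ℝ] V →L[ℝ] ℝ) (ha_symm : ∀ u v : V, a u v = a v u)
    (lam : ℝ) (hlam : 0 < lam) (ha_coer : ∀ v : V, lam * ‖v‖ ^ 2 ≤ a v v)
    (Φ : V → ℝ) (hΦ_conv : ConvexOn ℝ Set.univ Φ) (hΦ_cont : Continuous Φ)
    (K : Set V) (hK_ne : K.Nonempty) (hK_closed : IsClosed K) (hK_conv : Convex ℝ K)
    (T : ℝ) (hT : 0 < T) (u_b : V) (hub : u_b ∈ K)
    (g₁ g₂ : ℝ → H) (hg₁ : Continuous g₁) (hg₂ : Continuous g₂)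
    (u₁ u₂ u₄ : ℝ → V) (u₁' u₂' u₄' : ℝ → H)
    (h₁ : IsStrongSolution i a Φ K T u_b g₁ u₁ u₁')
    (h₂ : IsStrongSolution i a Φ K T u_b g₂ u₂ u₂')
    (μ : ℝ) (hμ : μ ∈ Set.Icc (0 : ℝ) 1)
    (h₄ : IsStrongSolution i a Φ K T u_b
      (fun t => μ • g₁ t + (1 - μ) • g₂ t) u₄ u₄')
    (u₃ : ℝ → V) (hu₃ : ∀ t, u₃ t = μ • u₁ t + (1 - μ) • u₂ t)
    (I₁₄ I₂₄ α β : ℝ → ℝ)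
    (hI₁₄ : ∀ t, I₁₄ t = ⟪u₁' t, i (u₄ t) - i (u₁ t)⟫ + a (u₁ t) (u₄ t - u₁ t)
      + Φ (u₄ t) - Φ (u₁ t) - ⟪g₁ t, i (u₄ t) - i (u₁ t)⟫)
    (hI₂₄ : ∀ t, I₂₄ t = ⟪u₂' t, i (u₄ t) - i (u₂ t)⟫ + a (u₂ t) (u₄ t - u₂ t)
      + Φ (u₄ t) - Φ (u₂ t) - ⟪g₂ t, i (u₄ t) - i (u₂ t)⟫)
    (hα : ∀ t, α t = ⟪u₁' t, i (u₂ t) - i (u₁ t)⟫ + a (u₁ t) (u₂ t - u₁ t)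
      + Φ (u₂ t) - Φ (u₁ t) - ⟪g₁ t, i (u₂ t) - i (u₁ t)⟫)
    (hβ : ∀ t, β t = ⟪u₂' t, i (u₁ t) - i (u₂ t)⟫ + a (u₂ t) (u₁ t - u₂ t)
      + Φ (u₁ t) - Φ (u₂ t) - ⟪g₂ t, i (u₁ t) - i (u₂ t)⟫)
    (hα0 : ∫ t in (0 : ℝ)..T, α t = 0) (hβ0 : ∫ t in (0 : ℝ)..T, β t = 0) :
    ∀ t ∈ Set.Icc (0 : ℝ) T,
      u₄ t = u₃ t ∧ I₁₄ t = 0 ∧ I₂₄ t = 0 ∧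
      Φ (u₃ t) = μ * Φ (u₁ t) + (1 - μ) * Φ (u₂ t) :=
  stmt_1_general i hi_inj a lam hlam ha_coer Φ hΦ_conv hΦ_cont K hK_conv T hT u_b g₁ g₂ hg₁ hg₂ u₁
    u₂ u₄ u₁' u₂' u₄' h₁ h₂ μ hμ h₄ u₃ hu₃ I₁₄ I₂₄ α β hI₁₄ hI₂₄ hα hβ hα0 hβ0
end

section
/- Let g₁, g₂ : [0,T] → H be continuous controls and let (u₁,u₁') and (u₂,u₂') be strong solutions of the parabolic variational inequality with controls g₁ and g₂ respectively, with the same initial value u_b. Then for every τ ∈ [0,T]: (1/2)‖i(u₁(τ)) − i(u₂(τ))‖_H² + λ ∫₀^τ ‖u₁(t)−u₂(t)‖_V² dt ≤ ∫₀^τ ⟨g₁(t)−g₂(t), i(u₁(t))−i(u₂(t))⟩_H dt. -/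
open scoped RealInnerProductSpace

/-! Test the inequality for `u₁` with `v = u₂(t)` and the one for `u₂` with `v = u₁(t)` and add
them: the `Φ` terms cancel and bilinearity turns the `a` terms into `-a(u₁ - u₂, u₁ - u₂)`, so
`⟨u₁' − u₂', w⟩ + λ‖u₁ − u₂‖_V² ≤ ⟨g₁ − g₂, w⟩` pointwise, where `w = i u₁ − i u₂`. Since
`⟨w', w⟩` is the derivative of `‖w‖²/2` and `w(0) = 0`, integrating over `[0, τ]` gives the
estimate. -/

open Set intervalIntegral

section

variable {V H : Type*} [NormedAddCommGroup V] [InnerProductSpace ℝ V]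
  [NormedAddCommGroup H] [InnerProductSpace ℝ H]

theorem integral_inner_deriv_self {w w' : ℝ → H} {a b : ℝ}
    (hw : ∀ t ∈ uIcc a b, HasDerivAt w (w' t) t) (hw' : ContinuousOn w' (uIcc a b)) :
    ∫ t in a..b, ⟪w' t, w t⟫ = ‖w b‖ ^ 2 / 2 - ‖w a‖ ^ 2 / 2 := by
  have hderiv : ∀ t ∈ uIcc a b, HasDerivAt (fun s => ‖w s‖ ^ 2 / 2) ⟪w' t, w t⟫ t := by
    intro t ht
    exact ((hw t ht).norm_sq.div_const 2).congr_deriv (by rw [real_inner_comm]; ring)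
  have hcont : ContinuousOn w (uIcc a b) := fun t ht =>
    (hw t ht).continuousAt.continuousWithinAt
  exact integral_eq_sub_of_hasDerivAt hderiv ((hw'.inner hcont).intervalIntegrable)

theorem IsStrongSolution.inner_sub_add_le {i : V →L[ℝ] H} {a : V →L[ℝ] V →L[ℝ] ℝ}
    {Φ : V → ℝ} {K : Set V} {T : ℝ} {u_b₁ u_b₂ : V} {g₁ g₂ : ℝ → H} {u₁ u₂ : ℝ → V}
    {u₁' u₂' : ℝ → H}
    (h₁ : IsStrongSolution i a Φ K T u_b₁ g₁ u₁ u₁')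
    (h₂ : IsStrongSolution i a Φ K T u_b₂ g₂ u₂ u₂') {t : ℝ} (ht : t ∈ Icc 0 T) :
    ⟪u₁' t - u₂' t, i (u₁ t) - i (u₂ t)⟫ + a (u₁ t - u₂ t) (u₁ t - u₂ t)
      ≤ ⟪g₁ t - g₂ t, i (u₁ t) - i (u₂ t)⟫ := by
  have hvi₁ := h₁.2.2.2.2.2 t ht (u₂ t) (h₂.2.2.1 t ht)
  have hvi₂ := h₂.2.2.2.2.2 t ht (u₁ t) (h₁.2.2.1 t ht)
  have hbilin : a (u₁ t) (u₂ t - u₁ t) + a (u₂ t) (u₁ t - u₂ t)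
      = -a (u₁ t - u₂ t) (u₁ t - u₂ t) := by
    simp only [map_sub, sub_apply]
    ring
  simp only [inner_sub_left, inner_sub_right] at hvi₁ hvi₂ ⊢
  linarith

end

theorem stmt_3_general {V H : Type*} [NormedAddCommGroup V] [InnerProductSpace ℝ V]
    [NormedAddCommGroup H] [InnerProductSpace ℝ H]
    (i : V →L[ℝ] H)
    (a : V →L[ℝ] V →L[ℝ] ℝ)
    (lam : ℝ) (ha_coer : ∀ v : V, lam * ‖v‖ ^ 2 ≤ a v v)
    (Φ : V → ℝ)
    (K : Set V)
    (T : ℝ) (u_b : V)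
    (g₁ g₂ : ℝ → H) (hg₁ : Continuous g₁) (hg₂ : Continuous g₂)
    (u₁ u₂ : ℝ → V) (u₁' u₂' : ℝ → H)
    (h₁ : IsStrongSolution i a Φ K T u_b g₁ u₁ u₁')
    (h₂ : IsStrongSolution i a Φ K T u_b g₂ u₂ u₂')
    (τ : ℝ) (hτ : τ ∈ Set.Icc (0 : ℝ) T) :
    (1 / 2) * ‖i (u₁ τ) - i (u₂ τ)‖ ^ 2
      + lam * ∫ t in (0 : ℝ)..τ, ‖u₁ t - u₂ t‖ ^ 2
      ≤ ∫ t in (0 : ℝ)..τ, ⟪g₁ t - g₂ t, i (u₁ t) - i (u₂ t)⟫ := by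
  obtain ⟨hτ0, hτT⟩ := hτ
  have hsub : uIcc 0 τ ⊆ Icc 0 T := by
    rw [uIcc_of_le hτ0]
    exact Icc_subset_Icc_right hτT
  have hpointwise : ∀ t ∈ Icc 0 τ, ⟪u₁' t - u₂' t, i (u₁ t) - i (u₂ t)⟫
      + lam * ‖u₁ t - u₂ t‖ ^ 2 ≤ ⟪g₁ t - g₂ t, i (u₁ t) - i (u₂ t)⟫ := fun t ht =>
    (add_le_add_right (ha_coer _) _).trans
      (h₁.inner_sub_add_le h₂ ⟨ht.1, ht.2.trans hτT⟩)
  obtain ⟨hc₁, hc₁', -, hd₁, h0₁, -⟩ := h₁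
  obtain ⟨hc₂, hc₂', -, hd₂, h0₂, -⟩ := h₂
  set w : ℝ → H := fun t => i (u₁ t) - i (u₂ t)
  have henergy : ∫ t in (0 : ℝ)..τ, ⟪u₁' t - u₂' t, w t⟫ = ‖w τ‖ ^ 2 / 2 := by
    rw [integral_inner_deriv_self (w := w) (fun t ht => (hd₁ t (hsub ht)).sub (hd₂ t (hsub ht)))
      (hc₁'.sub hc₂').continuousOn]
    simp [w, h0₁, h0₂]
  have hw : Continuous w := (i.continuous.comp hc₁).sub (i.continuous.comp hc₂)
  have hdist : Continuous fun t => lam * ‖u₁ t - u₂ t‖ ^ 2 := by fun_prop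
  have hflux : Continuous fun t => ⟪u₁' t - u₂' t, w t⟫ := (hc₁'.sub hc₂').inner hw
  calc (1 / 2) * ‖w τ‖ ^ 2 + lam * ∫ t in (0 : ℝ)..τ, ‖u₁ t - u₂ t‖ ^ 2
      = ∫ t in (0 : ℝ)..τ, (⟪u₁' t - u₂' t, w t⟫ + lam * ‖u₁ t - u₂ t‖ ^ 2) := by
        rw [integral_add (hflux.intervalIntegrable 0 τ) (hdist.intervalIntegrable 0 τ),
          integral_const_mul, henergy]
        ring
    _ ≤ ∫ t in (0 : ℝ)..τ, ⟪g₁ t - g₂ t, w t⟫ :=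
        integral_mono_on hτ0 ((hflux.add hdist).intervalIntegrable 0 τ)
          (((hg₁.sub hg₂).inner hw).intervalIntegrable 0 τ) hpointwise

/-- For two strong solutions `u₁, u₂` of the parabolic variational inequality with
controls `g₁, g₂` and the same initial value, for every `τ ∈ [0,T]`:
`(1/2)‖i u₁(τ) − i u₂(τ)‖² + λ∫₀^τ ‖u₁ − u₂‖_V² ≤ ∫₀^τ ⟨g₁ − g₂, i u₁ − i u₂⟩`. -/
theorem stmt_3 {V H : Type*} [NormedAddCommGroup V] [InnerProductSpace ℝ V]
    [NormedAddCommGroup H] [InnerProductSpace ℝ H]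
    (i : V →L[ℝ] H) (hi_inj : Function.Injective i) (hi_dense : DenseRange i)
    (a : V →L[ℝ] V →L[ℝ] ℝ) (ha_symm : ∀ u v : V, a u v = a v u)
    (lam : ℝ) (hlam : 0 < lam) (ha_coer : ∀ v : V, lam * ‖v‖ ^ 2 ≤ a v v)
    (Φ : V → ℝ) (hΦ_conv : ConvexOn ℝ Set.univ Φ) (hΦ_cont : Continuous Φ)
    (K : Set V) (hK_ne : K.Nonempty) (hK_closed : IsClosed K) (hK_conv : Convex ℝ K)
    (T : ℝ) (hT : 0 < T) (u_b : V) (hub : u_b ∈ K)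
    (g₁ g₂ : ℝ → H) (hg₁ : Continuous g₁) (hg₂ : Continuous g₂)
    (u₁ u₂ : ℝ → V) (u₁' u₂' : ℝ → H)
    (h₁ : IsStrongSolution i a Φ K T u_b g₁ u₁ u₁')
    (h₂ : IsStrongSolution i a Φ K T u_b g₂ u₂ u₂')
    (τ : ℝ) (hτ : τ ∈ Set.Icc (0 : ℝ) T) :
    (1 / 2) * ‖i (u₁ τ) - i (u₂ τ)‖ ^ 2
      + lam * ∫ t in (0 : ℝ)..τ, ‖u₁ t - u₂ t‖ ^ 2
      ≤ ∫ t in (0 : ℝ)..τ, ⟪g₁ t - g₂ t, i (u₁ t) - i (u₂ t)⟫ :=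
  stmt_3_general i a lam ha_coer Φ K T u_b g₁ g₂ hg₁ hg₂ u₁ u₂ u₁' u₂' h₁ h₂ τ hτ
end

section
/- Let g : [0,T] → H be a continuous control and let (u₁,u₁') and (u₂,u₂') be two strong solutions of the parabolic variational inequality with the same control g and the same initial value u_b. Then u₁(t) = u₂(t) for every t ∈ [0,T]. -/
/-! Testing the inequality of each solution with the other solution and adding the two cancels
`Φ` and `g`, leaving `⟪u₁' - u₂', i (u₁ - u₂)⟫ ≤ -a (u₁ - u₂) (u₁ - u₂) ≤ 0`. Hence
`‖i (u₁ t) - i (u₂ t)‖²`, whose derivative is twice that inner product, does not increase from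
its initial value `0`, and injectivity of `i` gives `u₁ = u₂`. -/

open scoped RealInnerProductSpace

theorem inner_sub_add_apply_sub_nonpos_of_variational_ineq {V H : Type*}
    [NormedAddCommGroup V] [InnerProductSpace ℝ V] [NormedAddCommGroup H] [InnerProductSpace ℝ H]
    (i : V →L[ℝ] H) (a : V →L[ℝ] V →L[ℝ] ℝ) (Φ : V → ℝ) {x₁ x₂ : V} {d₁ d₂ f : H}
    (h₁ : ⟪d₁, i x₂ - i x₁⟫ + a x₁ (x₂ - x₁) + Φ x₂ - Φ x₁ ≥ ⟪f, i x₂ - i x₁⟫)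
    (h₂ : ⟪d₂, i x₁ - i x₂⟫ + a x₂ (x₁ - x₂) + Φ x₁ - Φ x₂ ≥ ⟪f, i x₁ - i x₂⟫) :
    ⟪d₁ - d₂, i x₁ - i x₂⟫ + a (x₁ - x₂) (x₁ - x₂) ≤ 0 := by
  simp only [map_sub, inner_sub_left, inner_sub_right, sub_apply] at *
  linarith

theorem antitoneOn_norm_sq_of_inner_deriv_nonpos {E : Type*} [NormedAddCommGroup E]
    [InnerProductSpace ℝ E] {D : Set ℝ} (hD : Convex ℝ D) {F F' : ℝ → E}
    (hF : ∀ t ∈ D, HasDerivAt F (F' t) t) (hF' : ∀ t ∈ interior D, ⟪F t, F' t⟫ ≤ 0) :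
    AntitoneOn (‖F ·‖ ^ 2) D :=
  antitoneOn_of_hasDerivWithinAt_nonpos hD
    (fun t ht => (hF t ht).norm_sq.continuousAt.continuousWithinAt)
    (fun t ht => (hF t (interior_subset ht)).norm_sq.hasDerivWithinAt)
    (fun t ht => by linarith [hF' t ht])

theorem stmt_4_general {V H : Type*} [NormedAddCommGroup V] [InnerProductSpace ℝ V]
    [NormedAddCommGroup H] [InnerProductSpace ℝ H]
    (i : V →L[ℝ] H) (hi_inj : Function.Injective i)
    (a : V →L[ℝ] V →L[ℝ] ℝ)
    (lam : ℝ) (hlam : 0 < lam) (ha_coer : ∀ v : V, lam * ‖v‖ ^ 2 ≤ a v v)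
    (Φ : V → ℝ)
    (K : Set V)
    (T : ℝ) (u_b : V)
    (g : ℝ → H)
    (u₁ u₂ : ℝ → V) (u₁' u₂' : ℝ → H)
    (h₁ : IsStrongSolution i a Φ K T u_b g u₁ u₁')
    (h₂ : IsStrongSolution i a Φ K T u_b g u₂ u₂') :
    ∀ t ∈ Set.Icc (0 : ℝ) T, u₁ t = u₂ t := by
  obtain ⟨-, -, hK₁, hd₁, h0₁, hvi₁⟩ := h₁
  obtain ⟨-, -, hK₂, hd₂, h0₂, hvi₂⟩ := h₂
  have hdecay : AntitoneOn (fun s => ‖i (u₁ s) - i (u₂ s)‖ ^ 2) (Set.Icc 0 T) := by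
    refine antitoneOn_norm_sq_of_inner_deriv_nonpos (convex_Icc 0 T)
      (fun t ht => (hd₁ t ht).sub (hd₂ t ht)) fun t ht => ?_
    replace ht := interior_subset ht
    have hmono := inner_sub_add_apply_sub_nonpos_of_variational_ineq i a Φ
      (hvi₁ t ht _ (hK₂ t ht)) (hvi₂ t ht _ (hK₁ t ht))
    have hcoer : 0 ≤ a (u₁ t - u₂ t) (u₁ t - u₂ t) :=
      (by positivity : 0 ≤ lam * ‖u₁ t - u₂ t‖ ^ 2).trans (ha_coer _)
    rw [real_inner_comm]
    linarith
  intro t ht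
  have hle := hdecay ⟨le_rfl, ht.1.trans ht.2⟩ ht ht.1
  simp only [h0₁, h0₂, sub_self, norm_zero] at hle
  have hnorm : ‖i (u₁ t) - i (u₂ t)‖ = 0 := by nlinarith [norm_nonneg (i (u₁ t) - i (u₂ t))]
  exact hi_inj (sub_eq_zero.mp (norm_eq_zero.mp hnorm))

/-- Uniqueness of strong solutions of the parabolic variational inequality of the
second kind: two strong solutions with the same continuous control `g` and the
same initial value `u_b` coincide on `[0,T]`. -/
theorem stmt_4 {V H : Type*} [NormedAddCommGroup V] [InnerProductSpace ℝ V]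
    [NormedAddCommGroup H] [InnerProductSpace ℝ H]
    (i : V →L[ℝ] H) (hi_inj : Function.Injective i) (hi_dense : DenseRange i)
    (a : V →L[ℝ] V →L[ℝ] ℝ) (ha_symm : ∀ u v : V, a u v = a v u)
    (lam : ℝ) (hlam : 0 < lam) (ha_coer : ∀ v : V, lam * ‖v‖ ^ 2 ≤ a v v)
    (Φ : V → ℝ) (hΦ_conv : ConvexOn ℝ Set.univ Φ) (hΦ_cont : Continuous Φ)
    (K : Set V) (hK_ne : K.Nonempty) (hK_closed : IsClosed K) (hK_conv : Convex ℝ K)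
    (T : ℝ) (hT : 0 < T) (u_b : V) (hub : u_b ∈ K)
    (g : ℝ → H) (hg : Continuous g)
    (u₁ u₂ : ℝ → V) (u₁' u₂' : ℝ → H)
    (h₁ : IsStrongSolution i a Φ K T u_b g u₁ u₁')
    (h₂ : IsStrongSolution i a Φ K T u_b g u₂ u₂') :
    ∀ t ∈ Set.Icc (0 : ℝ) T, u₁ t = u₂ t :=
  stmt_4_general i hi_inj a lam hlam ha_coer Φ K T u_b g u₁ u₂ u₁' u₂' h₁ h₂
end

section
/- Suppose S satisfies the monotony inequality: for all g₁, g₂ ∈ E and all μ ∈ [0,1], ‖S(μ·g₁ + (1−μ)·g₂)‖ ≤ ‖μ·S(g₁) + (1−μ)·S(g₂)‖. Then J is strictly convex on E; in fact, for all g₁ ≠ g₂ in E and all μ ∈ (0,1): J(μ·g₁ + (1−μ)·g₂) ≤ μJ(g₁) + (1−μ)J(g₂) − (M/2)μ(1−μ)‖g₁ − g₂‖² < μJ(g₁) + (1−μ)J(g₂). -/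
/-!
The monotony inequality makes `g ↦ ‖S g‖²` convex, since `‖·‖²` is convex. Hence
`J g - (M/2)‖g‖² = (1/2)‖S g‖²` is convex, i.e. `J` is `M`-strongly convex, and the
quadratic defect `(M/2)μ(1-μ)‖g₁ - g₂‖²` is the definition of strong convexity.
-/

open Set

lemma convexOn_univ_norm_sq {F : Type*} [SeminormedAddCommGroup F] [NormedSpace ℝ F] :
    ConvexOn ℝ univ fun x : F ↦ ‖x‖ ^ 2 :=
  (convexOn_univ_norm).pow (fun _ _ ↦ norm_nonneg _) 2

lemma convexOn_univ_norm_sq_comp {E F : Type*} [AddCommGroup E] [Module ℝ E]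
    [SeminormedAddCommGroup F] [NormedSpace ℝ F] {S : E → F}
    (hS : ∀ g₁ g₂ : E, ∀ μ ∈ Icc (0 : ℝ) 1,
      ‖S (μ • g₁ + (1 - μ) • g₂)‖ ≤ ‖μ • S g₁ + (1 - μ) • S g₂‖) :
    ConvexOn ℝ univ fun g ↦ ‖S g‖ ^ 2 := by
  refine ⟨convex_univ, fun x _ y _ a b ha hb hab ↦ ?_⟩
  obtain rfl : b = 1 - a := eq_sub_of_add_eq' hab
  calc ‖S (a • x + (1 - a) • y)‖ ^ 2 ≤ ‖a • S x + (1 - a) • S y‖ ^ 2 := by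
        gcongr
        exact hS x y a ⟨ha, by linarith⟩
    _ ≤ a • ‖S x‖ ^ 2 + (1 - a) • ‖S y‖ ^ 2 :=
        convexOn_univ_norm_sq.2 trivial trivial ha hb hab

lemma strongConvexOn_univ_half_norm_sq_comp_add {E F : Type*} [NormedAddCommGroup E]
    [InnerProductSpace ℝ E] [SeminormedAddCommGroup F] [NormedSpace ℝ F] {S : E → F} {M : ℝ}
    (hS : ∀ g₁ g₂ : E, ∀ μ ∈ Icc (0 : ℝ) 1,
      ‖S (μ • g₁ + (1 - μ) • g₂)‖ ≤ ‖μ • S g₁ + (1 - μ) • S g₂‖) :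
    StrongConvexOn univ M fun g ↦ (1 / 2) * ‖S g‖ ^ 2 + (M / 2) * ‖g‖ ^ 2 := by
  rw [strongConvexOn_iff_convex]
  simpa only [add_sub_cancel_right, smul_eq_mul] using
    (convexOn_univ_norm_sq_comp hS).smul (by norm_num : (0 : ℝ) ≤ 1 / 2)

/-- If `S` satisfies the monotony inequality
`‖S(μ·g₁ + (1−μ)·g₂)‖ ≤ ‖μ·S g₁ + (1−μ)·S g₂‖` for all `g₁, g₂` and `μ ∈ [0,1]`,
then `J(g) = (1/2)‖S g‖² + (M/2)‖g‖²` is strictly convex on `E`; in fact, for all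
`g₁ ≠ g₂` and `μ ∈ (0,1)`:
`J(μ·g₁ + (1−μ)·g₂) ≤ μ J(g₁) + (1−μ) J(g₂) − (M/2)μ(1−μ)‖g₁ − g₂‖²
  < μ J(g₁) + (1−μ) J(g₂)`. -/
theorem stmt_16 {E F : Type*} [NormedAddCommGroup E] [InnerProductSpace ℝ E]
    [NormedAddCommGroup F] [InnerProductSpace ℝ F]
    (S : E → F) (M : ℝ) (hM : 0 < M)
    (J : E → ℝ) (hJ : ∀ g, J g = (1 / 2) * ‖S g‖ ^ 2 + (M / 2) * ‖g‖ ^ 2)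
    (hS : ∀ g₁ g₂ : E, ∀ μ ∈ Set.Icc (0 : ℝ) 1,
      ‖S (μ • g₁ + (1 - μ) • g₂)‖ ≤ ‖μ • S g₁ + (1 - μ) • S g₂‖) :
    StrictConvexOn ℝ Set.univ J ∧
    ∀ g₁ g₂ : E, g₁ ≠ g₂ → ∀ μ ∈ Set.Ioo (0 : ℝ) 1,
      J (μ • g₁ + (1 - μ) • g₂)
          ≤ μ * J g₁ + (1 - μ) * J g₂ - (M / 2) * μ * (1 - μ) * ‖g₁ - g₂‖ ^ 2 ∧
      μ * J g₁ + (1 - μ) * J g₂ - (M / 2) * μ * (1 - μ) * ‖g₁ - g₂‖ ^ 2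
          < μ * J g₁ + (1 - μ) * J g₂ := by
  obtain rfl : J = fun g ↦ (1 / 2) * ‖S g‖ ^ 2 + (M / 2) * ‖g‖ ^ 2 := funext hJ
  have hJM := strongConvexOn_univ_half_norm_sq_comp_add (M := M) hS
  refine ⟨hJM.strictConvexOn hM, fun g₁ g₂ hne μ ⟨hμ₀, hμ₁⟩ ↦ ⟨?_, ?_⟩⟩
  · have h := hJM.2 (mem_univ g₁) (mem_univ g₂) hμ₀.le (sub_nonneg.2 hμ₁.le) (add_sub_cancel μ 1)
    simp only [smul_eq_mul] at h
    linarith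
  · have : 0 < ‖g₁ - g₂‖ := norm_pos_iff.2 (sub_ne_zero.2 hne)
    have : 0 < 1 - μ := sub_pos.2 hμ₁
    exact sub_lt_self _ (by positivity)
end
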